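/- Assume 2^κ = κ⁺. Then there exists a strongly 𝓒-independent family on κ⁺ of cardinality κ: a family 𝓘 ⊆ 𝒫(κ⁺) with |𝓘| = κ such that every Boolean combination of length < κ⁺ of 𝓘 is stationary in κ⁺. -/

import Mathlib

open Cardinal

/-- `C` is a club (closed unbounded) subset of the ordinal `o`. -/
def IsClubIn (C : Set Ordinal) (o : Ordinal) : Prop :=
  C ⊆ Set.Iio o ∧ (∀ a < o, ∃ b ∈ C, a ≤ b) ∧
    (∀ a < o, a ≠ 0 → (∀ b < a, ∃ c ∈ C, b < c ∧ c < a) → a ∈ C)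

/-- `S` is a stationary subset of the ordinal `o`: it meets every club in `o`. -/
def IsStationaryIn (S : Set Ordinal) (o : Ordinal) : Prop :=
  S ⊆ Set.Iio o ∧ ∀ C, IsClubIn C o → (S ∩ C).Nonempty

/-!
Index κ⁺ = 2^κ pairwise disjoint stationary sets `S g` by the functions `g : κ → Bool` and put
`I a = ⋃ {S g | g a}`. Each `S g` lies inside `I a` or inside its complement according to `g a`,
so every Boolean combination of the `I a` contains the `S g` whose signs it
prescribes and is therefore stationary.

The disjoint stationary sets come from an Ulam matrix: fix injections `ξ → κ` for `ξ < κ⁺`. For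
each `β`, the ordinals `ξ > β` split into `κ` rows according to where `ξ` sends `β`, so some row is
stationary; κ⁺ many `β` pick the same row index, and their rows are disjoint by injectivity.
-/

universe u v

open Cardinal Function Order Set

section Transfer

variable {o : Ordinal.{u}}

theorem Ordinal.ToType.coe_lt (x : o.ToType) : (x : Ordinal) < o :=
  (Ordinal.ToType.toOrd x).2

theorem Ordinal.ToType.strictMono_coe : StrictMono ((↑) : o.ToType → Ordinal) :=
  fun _ _ h ↦ Ordinal.ToType.mk.symm.strictMono h

theorem Ordinal.ToType.exists_coe_eq {b : Ordinal.{u}} (hb : b < o) :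
    ∃ x : o.ToType, (x : Ordinal) = b :=
  ⟨Ordinal.ToType.mk ⟨b, hb⟩, by simp⟩

theorem IsClubIn.isClub_preimage {C : Set Ordinal.{u}} (hC : IsClubIn C o) :
    IsClub (((↑) : o.ToType → Ordinal) ⁻¹' C) := by
  have hmono := Ordinal.ToType.strictMono_coe (o := o)
  refine ⟨dirSupClosed_iff_of_linearOrder.2 fun d hdC ⟨c, hcd⟩ a ha ↦ ?_, fun x ↦ ?_⟩
  · by_cases had : a ∈ d
    · exact hdC had
    have hca : c < a := (ha.1 hcd).lt_of_ne fun h ↦ had (h ▸ hcd)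
    refine hC.2.2 _ a.coe_lt (hmono hca).ne_bot fun b hb ↦ ?_
    obtain ⟨b, rfl⟩ := Ordinal.ToType.exists_coe_eq (hb.trans a.coe_lt)
    obtain ⟨c', hc'd, hbc', hc'a⟩ := ha.exists_between' had (hmono.lt_iff_lt.1 hb)
    exact ⟨c', hdC hc'd, hmono hbc', hmono hc'a⟩
  · obtain ⟨b, hbC, hxb⟩ := hC.2.1 _ x.coe_lt
    obtain ⟨y, rfl⟩ := Ordinal.ToType.exists_coe_eq (hC.1 hbC)
    exact ⟨y, hbC, hmono.le_iff_le.1 hxb⟩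

theorem IsStationary.isStationaryIn_image {s : Set o.ToType} (hs : IsStationary s) :
    IsStationaryIn (((↑) : o.ToType → Ordinal) '' s) o := by
  refine ⟨image_subset_iff.2 fun x _ ↦ x.coe_lt, fun C hC ↦ ?_⟩
  obtain ⟨x, hxs, hxC⟩ := hs hC.isClub_preimage
  exact ⟨x, ⟨x, hxs, rfl⟩, hxC⟩

theorem IsStationaryIn.mono {S T : Set Ordinal.{u}} (hS : IsStationaryIn S o) (hST : S ⊆ T)
    (hT : T ⊆ Iio o) : IsStationaryIn T o :=
  ⟨hT, fun C hC ↦ (hS.2 C hC).mono (inter_subset_inter_left _ hST)⟩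

end Transfer

section UlamMatrix

variable {α : Type u} {K : Type v} [LinearOrder α]

def ulamRow (F : ∀ ξ : α, Iio ξ → K) (β : α) (η : K) : Set α :=
  {ξ | ∃ h : β < ξ, F ξ ⟨β, h⟩ = η}

theorem iUnion_ulamRow (F : ∀ ξ : α, Iio ξ → K) (β : α) : ⋃ η, ulamRow F β η = Ioi β := by
  ext ξ
  simp [ulamRow]

theorem disjoint_ulamRow {F : ∀ ξ : α, Iio ξ → K} (hF : ∀ ξ, Injective (F ξ))
    {β β' : α} (hβ : β ≠ β') (η : K) : Disjoint (ulamRow F β η) (ulamRow F β' η) := by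
  refine Set.disjoint_left.2 fun ξ ⟨h, hη⟩ ⟨h', hη'⟩ ↦ hβ ?_
  exact congrArg Subtype.val (hF ξ (hη.trans hη'.symm))

theorem isStationary_Ioi [NoMaxOrder α] (β : α) : IsStationary (Ioi β) := by
  refine IsStationary.of_not_isCofinal_compl fun h ↦ ?_
  obtain ⟨γ, hγ⟩ := exists_gt β
  obtain ⟨δ, hδ, hγδ⟩ := h γ
  exact hδ (hγ.trans_le hγδ)

theorem exists_isStationary_ulamRow [WellFoundedLT α] [NoMaxOrder α] (hα : Order.cof α ≠ ℵ₀)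
    (hK : lift.{u} #K < lift.{v} (Order.cof α)) (F : ∀ ξ : α, Iio ξ → K) (β : α) :
    ∃ η, IsStationary (ulamRow F β η) :=
  (isStationary_iUnion_iff hα hK).1 (iUnion_ulamRow F β ▸ isStationary_Ioi β)

end UlamMatrix

theorem exists_pairwise_disjoint_isStationary {κ : Cardinal.{u}} (hκ : ℵ₀ ≤ κ) {ι : Type u}
    (hι : #ι ≤ succ κ) :
    ∃ S : ι → Set (succ κ).ord.ToType, (∀ i, IsStationary (S i)) ∧ Pairwise (Disjoint on S) := by
  have hreg := isRegular_succ hκ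
  have : NoMaxOrder (succ κ).ord.ToType := noMaxOrder hreg.aleph0_le
  have hemb (ξ : (succ κ).ord.ToType) : Nonempty (Iio ξ ↪ κ.out) := by
    rw [← le_def, mk_out, ← lt_succ_iff]
    exact (mk_Iio_lt ξ (by simp)).trans_eq (by simp)
  let F ξ := (hemb ξ).some
  have hcof : Order.cof (succ κ).ord.ToType = succ κ := by rw [Ordinal.cof_toType, hreg.cof_ord]
  choose G hG using exists_isStationary_ulamRow
    (by rw [hcof]; exact (hκ.trans_lt (lt_succ κ)).ne') (by simp [hcof]) fun ξ ↦ F ξ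
  obtain ⟨η, hη⟩ := infinite_pigeonhole_card G (succ κ) (by simp) hreg.aleph0_le
    (by simp [hreg.cof_ord])
  obtain ⟨e⟩ := (le_def _ _).1 (hι.trans hη)
  refine ⟨fun i ↦ ulamRow (fun ξ ↦ F ξ) (e i) η, fun i ↦ ?_, fun i j hij ↦ ?_⟩
  · have hGe : G (e i) = η := (e i).2
    simpa only [hGe] using hG (e i)
  · exact disjoint_ulamRow (fun ξ ↦ (F ξ).injective) (fun h ↦ hij (e.injective (Subtype.ext h))) η

section CoordUnion

variable {X K : Type*} {S : (K → Bool) → Set X}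

def coordUnion (S : (K → Bool) → Set X) (a : K) : Set X :=
  ⋃ (g) (_ : g a = true), S g

theorem mem_coordUnion_iff (hS : Pairwise (Disjoint on S)) {g : K → Bool} {x : X}
    (hx : x ∈ S g) (a : K) : x ∈ coordUnion S a ↔ g a = true := by
  refine ⟨fun hxa ↦ ?_, fun ha ↦ mem_biUnion (x := g) ha hx⟩
  obtain ⟨g', hg'a, hxg'⟩ := mem_iUnion₂.1 hxa
  obtain rfl : g = g' := by_contra fun hne ↦ Set.disjoint_left.1 (hS hne) hx hxg'
  exact hg'a

theorem coordUnion_subset {T : Set X} (hST : ∀ g, S g ⊆ T) (a : K) : coordUnion S a ⊆ T :=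
  iUnion₂_subset fun g _ ↦ hST g

theorem coordUnion_injective (hS : Pairwise (Disjoint on S)) (hne : ∀ g, (S g).Nonempty) :
    Injective (coordUnion S) := by
  classical
  intro a b hab
  obtain ⟨x, hx⟩ := hne fun c ↦ decide (c = a)
  have := (mem_coordUnion_iff hS hx b).1 (hab ▸ (mem_coordUnion_iff hS hx a).2 (by simp))
  simpa [eq_comm] using this

theorem subset_inter_biInter_ite (hS : Pairwise (Disjoint on S)) {T : Set X}
    (hST : ∀ g, S g ⊆ T) {D : Set (Set X)} (hD : D ⊆ range (coordUnion S)) (f : Set X → Bool) :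
    S (fun a ↦ !f (coordUnion S a)) ⊆ T ∩ ⋂ J ∈ D, if f J then T \ J else J := by
  intro x hx
  refine ⟨hST _ hx, mem_iInter₂.2 fun J hJ ↦ ?_⟩
  obtain ⟨a, rfl⟩ := hD hJ
  have := mem_coordUnion_iff hS hx a
  cases h : f (coordUnion S a) <;> simp_all [hST _ hx]

end CoordUnion

/-- if `2^κ = κ⁺`, there is a strongly `𝓒`-independent family on `κ⁺`
of cardinality `κ`: every Boolean combination of length `< κ⁺` is stationary in `κ⁺`.
Sign `false` means `I`, sign `true` means `κ⁺ ∖ I`. -/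
theorem CH_implies_strongly_club_independent (κ : Cardinal.{0}) (hκ : ℵ₀ ≤ κ)
    (h2 : 2 ^ κ = Order.succ κ) :
    ∃ 𝓘 : Set (Set Ordinal.{0}), (∀ I ∈ 𝓘, I ⊆ Set.Iio (Order.succ κ).ord) ∧
      #𝓘 = Cardinal.lift.{1} κ ∧
      ∀ D ⊆ 𝓘, #D < Cardinal.lift.{1} (Order.succ κ) → ∀ f : Set Ordinal.{0} → Bool,
        IsStationaryIn (Set.Iio (Order.succ κ).ord ∩
            ⋂ I ∈ D, (if f I then Set.Iio (Order.succ κ).ord \ I else I))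
          (Order.succ κ).ord := by
  obtain ⟨S, hS, hdisj⟩ := exists_pairwise_disjoint_isStationary hκ (ι := κ.out → Bool)
    (by rw [← power_def, mk_bool, mk_out, h2])
  set T : (κ.out → Bool) → Set Ordinal := fun g ↦ (↑) '' S g
  have hT g : IsStationaryIn (T g) (succ κ).ord := (hS g).isStationaryIn_image
  have hTdisj : Pairwise (Disjoint on T) := fun g g' hgg' ↦
    (disjoint_image_iff Ordinal.ToType.strictMono_coe.injective).2 (hdisj hgg')
  refine ⟨range (coordUnion T), ?_, ?_, fun D hD _ f ↦ ?_⟩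
  · rintro _ ⟨a, rfl⟩
    exact coordUnion_subset (fun g ↦ (hT g).1) a
  · have hinj := coordUnion_injective hTdisj fun g ↦ (hS g).nonempty.image _
    simpa using mk_range_eq_of_injective hinj
  · exact (hT _).mono (subset_inter_biInter_ite hTdisj (fun g ↦ (hT g).1) hD f) inter_subset_left
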